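/- Assume the rate coefficients satisfy the growth condition (GB) with constants C, Q and weights q_{i,k}, let σ belong to class 𝓔 ∪ 𝓔₁ with associated constant m_σ, let N ≥ 2, and let c^N = (c_i^N)_{0≤i≤N} be a nonnegative solution of the N-truncated isolated DGED system on [0,T] with initial data c_i^N(0) = c_{0i} ≥ 0. Set K = 2 C Q m_σ ∑_{i=0}^N i c_{0i}. Then for all t ∈ [0,T], ∑_{i=0}^N σ(i) c_i^N(t) ≤ e^{Kt} ∑_{i=0}^N σ(i) c_{0i}. -/

import Mathlib

/-!
Testing the system against a weight `φ` gives the weak form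
`d/dt ∑ φ(i) c_i = ∑ a(j,l;k) c_j c_l (φ(j-k) + φ(l+k) - φ(j) - φ(l))`.
For `φ(i) = i` the bracket vanishes, so the first moment `M₁` is conserved. For `φ = σ`, the
constant `m` bounds `(l+k)` times the bracket by `m (l σ(k) + k σ(l))`; (GB) trades the factor
`l + k` for the rate, and `σ(k) ≤ (k/j) σ(j)` together with `∑_k k(j-k+1) q_{j,k} ≤ Q j` bounds the
derivative of `M_σ` by `2 C Q m M₁ M_σ = K M_σ`. Grönwall's lemma concludes.
-/

open Finset

/-- Truncated operator `Q^N_{1,i}`. -/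
noncomputable def QN1 (a : ℕ → ℕ → ℕ → ℝ) (N : ℕ) (c : ℕ → ℝ) (i : ℕ) : ℝ :=
  ∑ k ∈ Finset.Icc 1 (N - i), ∑ j ∈ Finset.Icc 0 (N - k), a (i + k) j k * c (i + k) * c j

/-- Truncated operator `Q^N_{2,i}`. -/
noncomputable def QN2 (a : ℕ → ℕ → ℕ → ℝ) (N : ℕ) (c : ℕ → ℝ) (i : ℕ) : ℝ :=
  -∑ k ∈ Finset.Icc 1 (N - i), ∑ j ∈ Finset.Icc k N, a j i k * c j * c i

/-- Truncated operator `Q^N_{3,i}`. -/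
noncomputable def QN3 (a : ℕ → ℕ → ℕ → ℝ) (N : ℕ) (c : ℕ → ℝ) (i : ℕ) : ℝ :=
  ∑ k ∈ Finset.Icc 1 i, ∑ j ∈ Finset.Icc k N, a j (i - k) k * c j * c (i - k)

/-- Truncated operator `Q^N_{4,i}`. -/
noncomputable def QN4 (a : ℕ → ℕ → ℕ → ℝ) (N : ℕ) (c : ℕ → ℝ) (i : ℕ) : ℝ :=
  -∑ k ∈ Finset.Icc 1 i, ∑ j ∈ Finset.Icc 0 (N - k), a i j k * c j * c i

/-- `c` is a solution of the `N`-truncated isolated DGED system on the set `I`. -/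
def IsTruncSolIso (a : ℕ → ℕ → ℕ → ℝ) (N : ℕ) (I : Set ℝ) (c : ℕ → ℝ → ℝ) : Prop :=
  ∀ t ∈ I,
    HasDerivAt (c 0) (QN1 a N (fun n => c n t) 0 + QN2 a N (fun n => c n t) 0) t ∧
    (∀ i, 1 ≤ i → i ≤ N - 1 →
      HasDerivAt (c i)
        (QN1 a N (fun n => c n t) i + QN2 a N (fun n => c n t) i +
          QN3 a N (fun n => c n t) i + QN4 a N (fun n => c n t) i) t) ∧
    HasDerivAt (c N) (QN3 a N (fun n => c n t) N + QN4 a N (fun n => c n t) N) t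

/-- Growth condition (GB) on the rate coefficients. -/
def GB (a : ℕ → ℕ → ℕ → ℝ) (C Q : ℝ) (q : ℕ → ℕ → ℝ) : Prop :=
  1 ≤ C ∧ 1 ≤ Q ∧ (∀ i k, 0 ≤ q i k) ∧
  (∀ i : ℕ, 1 ≤ i →
    ∑ k ∈ Finset.Icc 1 i, (k : ℝ) * ((i : ℝ) - k + 1) * q i k ≤ Q * i) ∧
  (∀ i j k : ℕ, 1 ≤ k → k ≤ i → 1 ≤ j →
    a i j k ≤ C * ((i : ℝ) - k + 1) * ((j : ℝ) + k) * q i k)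

/-- The class `𝓔` of convex weight functions. -/
def ClassE (σ : ℝ → ℝ) : Prop :=
  ContDiffOn ℝ 1 σ (Set.Ici 0) ∧ ConvexOn ℝ (Set.Ici 0) σ ∧
  (∀ x : ℝ, 0 ≤ x → 0 ≤ σ x) ∧ σ 0 = 0 ∧
  0 ≤ derivWithin σ (Set.Ici 0) 0 ∧
  ConcaveOn ℝ (Set.Ici 0) (derivWithin σ (Set.Ici 0)) ∧
  Filter.Tendsto (derivWithin σ (Set.Ici 0)) Filter.atTop Filter.atTop ∧
  Filter.Tendsto (fun r : ℝ => σ r / r) Filter.atTop Filter.atTop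

/-- The class `𝓔₁` of convex weight functions. -/
def ClassE1 (σ : ℝ → ℝ) : Prop :=
  ContDiffOn ℝ 2 σ (Set.Ici 0) ∧ ConvexOn ℝ (Set.Ici 0) σ ∧
  (∀ x : ℝ, 0 ≤ x → 0 ≤ σ x) ∧ σ 0 = 0 ∧
  derivWithin σ (Set.Ici 0) 0 = 0 ∧
  ConvexOn ℝ (Set.Ici 0) (derivWithin σ (Set.Ici 0)) ∧
  ∃ A : ℝ, 0 ≤ A ∧ ∀ x : ℝ, 0 ≤ x →
    derivWithin σ (Set.Ici 0) (2 * x) ≤ A * derivWithin σ (Set.Ici 0) x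

/-- `m` is a constant associated to `σ` as in Lemma 3.2 of Laurençot–Mischler. -/
def SigmaConst (σ : ℝ → ℝ) (m : ℝ) : Prop :=
  0 ≤ m ∧ ∀ x y : ℝ, 0 ≤ x → 1 ≤ y →
    (x + y) * (σ (x + y) - σ x - σ y) ≤ m * (x * σ y + y * σ x)

section Weight

variable {σ : ℝ → ℝ}

theorem convexOn_nonneg_zero_of_classE_or_classE1 (hσ : ClassE σ ∨ ClassE1 σ) :
    ConvexOn ℝ (Set.Ici 0) σ ∧ (∀ x, 0 ≤ x → 0 ≤ σ x) ∧ σ 0 = 0 := by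
  rcases hσ with h | h <;> exact ⟨h.2.1, h.2.2.1, h.2.2.2.1⟩

theorem mul_apply_le_mul_apply_of_convexOn (hσ : ConvexOn ℝ (Set.Ici 0) σ) (hσ0 : σ 0 = 0)
    {x y : ℝ} (hx : 0 ≤ x) (hxy : x ≤ y) : y * σ x ≤ x * σ y := by
  rcases hx.eq_or_lt with rfl | hx
  · simp [hσ0]
  rcases hxy.eq_or_lt with rfl | hxy
  · rw [mul_comm]
  simpa [hσ0] using hσ.secant_mono_aux1 (x := 0) Set.self_mem_Ici (hx.trans hxy).le hx hxy

theorem apply_add_apply_le_of_convexOn (hσ : ConvexOn ℝ (Set.Ici 0) σ) (hσ0 : σ 0 = 0)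
    {x y : ℝ} (hx : 0 ≤ x) (hy : 0 ≤ y) : σ x + σ y ≤ σ (x + y) := by
  rcases (add_nonneg hx hy).eq_or_lt with hxy | hxy
  · obtain ⟨rfl, rfl⟩ : x = 0 ∧ y = 0 := ⟨by linarith, by linarith⟩
    simp [hσ0]
  have hx' := mul_apply_le_mul_apply_of_convexOn hσ hσ0 hx (le_add_of_nonneg_right hy)
  have hy' := mul_apply_le_mul_apply_of_convexOn hσ hσ0 hy (le_add_of_nonneg_left hx)
  exact le_of_mul_le_mul_left (by linear_combination hx' + hy') hxy

theorem SigmaConst.mul_exchange_le {m : ℝ} (hm : SigmaConst σ m) (hσ : ConvexOn ℝ (Set.Ici 0) σ)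
    (hσ0 : σ 0 = 0) {x y z : ℝ} (hx : 0 ≤ x) (hy : 1 ≤ y) (hz : 0 ≤ z) :
    (z + y) * (σ x + σ (z + y) - σ (x + y) - σ z) ≤ m * (z * σ y + y * σ z) := by
  have hsup : (z + y) * (σ x + σ y - σ (x + y)) ≤ 0 :=
    mul_nonpos_of_nonneg_of_nonpos (by linarith)
      (by linarith [apply_add_apply_le_of_convexOn hσ hσ0 hx (zero_le_one.trans hy)])
  linear_combination hsup + hm.2 z y hz hy

end Weight

def moment (φ : ℕ → ℝ) (N : ℕ) (b : ℕ → ℝ) : ℝ :=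
  ∑ i ∈ range (N + 1), φ i * b i

def weakForm (a : ℕ → ℕ → ℕ → ℝ) (N : ℕ) (c φ : ℕ → ℝ) : ℝ :=
  ∑ k ∈ Icc 1 N, ∑ j ∈ Icc k N, ∑ l ∈ Icc 0 (N - k),
    a j l k * c j * c l * (φ (j - k) + φ (l + k) - φ j - φ l)

theorem moment_nonneg {φ : ℕ → ℝ} {N : ℕ} {b : ℕ → ℝ} (hφ : ∀ i, 0 ≤ φ i)
    (hb : ∀ i ≤ N, 0 ≤ b i) : 0 ≤ moment φ N b :=
  sum_nonneg fun i hi => mul_nonneg (hφ i) (hb i (Nat.lt_succ_iff.mp (mem_range.mp hi)))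

section WeakForm

variable (a : ℕ → ℕ → ℕ → ℝ) (N : ℕ) (c φ : ℕ → ℝ)

theorem sum_mul_QN1 :
    ∑ i ∈ range (N + 1), φ i * QN1 a N c i
      = ∑ k ∈ Icc 1 N, ∑ j ∈ Icc k N, ∑ l ∈ Icc 0 (N - k), a j l k * c j * c l * φ (j - k) := by
  simp only [QN1, mul_sum]
  rw [sum_comm' (t' := Icc 1 N) (s' := fun k => Icc 0 (N - k))
    (fun i k => by simp only [mem_Icc, mem_range]; omega)]
  refine sum_congr rfl fun k hk => ?_
  simp only [mem_Icc] at hk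
  refine sum_nbij' (· + k) (· - k) ?_ ?_ ?_ ?_ ?_
  · intro i hi; simp only [mem_Icc] at hi ⊢; omega
  · intro j hj; simp only [mem_Icc] at hj ⊢; omega
  · intro i _; show i + k - k = i; omega
  · intro j hj; simp only [mem_Icc] at hj; show j - k + k = j; omega
  · intro i _
    refine sum_congr rfl fun l _ => ?_
    rw [Nat.add_sub_cancel]; ring

theorem sum_mul_QN2 :
    ∑ i ∈ range (N + 1), φ i * QN2 a N c i
      = -∑ k ∈ Icc 1 N, ∑ j ∈ Icc k N, ∑ l ∈ Icc 0 (N - k), a j l k * c j * c l * φ l := by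
  simp only [QN2, mul_neg, mul_sum, sum_neg_distrib, neg_inj]
  rw [sum_comm' (t' := Icc 1 N) (s' := fun k => Icc 0 (N - k))
    (fun i k => by simp only [mem_Icc, mem_range]; omega)]
  refine sum_congr rfl fun k _ => ?_
  rw [sum_comm]
  exact sum_congr rfl fun j _ => sum_congr rfl fun l _ => by ring

theorem sum_mul_QN3 :
    ∑ i ∈ range (N + 1), φ i * QN3 a N c i
      = ∑ k ∈ Icc 1 N, ∑ j ∈ Icc k N, ∑ l ∈ Icc 0 (N - k), a j l k * c j * c l * φ (l + k) := by
  simp only [QN3, mul_sum]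
  rw [sum_comm' (t' := Icc 1 N) (s' := fun k => Icc k N)
    (fun i k => by simp only [mem_Icc, mem_range]; omega)]
  refine sum_congr rfl fun k hk => ?_
  simp only [mem_Icc] at hk
  rw [sum_comm]
  refine sum_congr rfl fun j _ => ?_
  refine sum_nbij' (· - k) (· + k) ?_ ?_ ?_ ?_ ?_
  · intro i hi; simp only [mem_Icc] at hi ⊢; omega
  · intro l hl; simp only [mem_Icc] at hl ⊢; omega
  · intro i hi; simp only [mem_Icc] at hi; show i - k + k = i; omega
  · intro l _; show l + k - k = l; omega
  · intro i hi
    simp only [mem_Icc] at hi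
    rw [Nat.sub_add_cancel hi.1]; ring

theorem sum_mul_QN4 :
    ∑ i ∈ range (N + 1), φ i * QN4 a N c i
      = -∑ k ∈ Icc 1 N, ∑ j ∈ Icc k N, ∑ l ∈ Icc 0 (N - k), a j l k * c j * c l * φ j := by
  simp only [QN4, mul_neg, mul_sum, sum_neg_distrib, neg_inj]
  rw [sum_comm' (t' := Icc 1 N) (s' := fun k => Icc k N)
    (fun i k => by simp only [mem_Icc, mem_range]; omega)]
  exact sum_congr rfl fun k _ => sum_congr rfl fun j _ => sum_congr rfl fun l _ => by ring

theorem sum_mul_QN_eq_weakForm :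
    ∑ i ∈ range (N + 1), φ i * (QN1 a N c i + QN2 a N c i + QN3 a N c i + QN4 a N c i)
      = weakForm a N c φ := by
  simp only [mul_add, sum_add_distrib]
  rw [sum_mul_QN1, sum_mul_QN2, sum_mul_QN3, sum_mul_QN4, weakForm]
  simp only [← sum_neg_distrib, ← sum_add_distrib]
  exact sum_congr rfl fun k _ => sum_congr rfl fun j _ => sum_congr rfl fun l _ => by ring

theorem weakForm_natCast : weakForm a N c (fun i => (i : ℝ)) = 0 := by
  refine sum_eq_zero fun k _ => sum_eq_zero fun j hj => sum_eq_zero fun l _ => ?_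
  dsimp only
  rw [Nat.cast_sub (mem_Icc.mp hj).1]
  push_cast
  ring

end WeakForm

namespace IsTruncSolIso

variable {a : ℕ → ℕ → ℕ → ℝ} {N : ℕ} {I : Set ℝ} {c : ℕ → ℝ → ℝ}

theorem hasDerivAt (hc : IsTruncSolIso a N I c) {t : ℝ} (ht : t ∈ I) {i : ℕ} (hi : i ≤ N) :
    HasDerivAt (c i) (QN1 a N (fun n => c n t) i + QN2 a N (fun n => c n t) i +
      QN3 a N (fun n => c n t) i + QN4 a N (fun n => c n t) i) t := by
  obtain ⟨h0, hmid, hN⟩ := hc t ht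
  rcases Nat.eq_zero_or_pos i with rfl | hpos
  · simpa [QN3, QN4] using h0
  rcases hi.eq_or_lt with rfl | hlt
  · simpa [QN1, QN2] using hN
  exact hmid i hpos (by omega)

theorem hasDerivAt_moment (hc : IsTruncSolIso a N I c) {t : ℝ} (ht : t ∈ I) (φ : ℕ → ℝ) :
    HasDerivAt (fun s => moment φ N (c · s)) (weakForm a N (c · t) φ) t := by
  rw [← sum_mul_QN_eq_weakForm]
  exact HasDerivAt.fun_sum fun i hi =>
    (hc.hasDerivAt ht (Nat.lt_succ_iff.mp (mem_range.mp hi))).const_mul (φ i)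

theorem moment_natCast_eq {t₀ T : ℝ} (hc : IsTruncSolIso a N (Set.Icc t₀ T) c) :
    ∀ t ∈ Set.Icc t₀ T,
      moment (fun i => (i : ℝ)) N (c · t) = moment (fun i => (i : ℝ)) N (c · t₀) :=
  have hderiv (t : ℝ) (ht : t ∈ Set.Icc t₀ T) :
      HasDerivAt (fun s => moment (fun i => (i : ℝ)) N (c · s)) 0 t := by
    simpa only [weakForm_natCast] using hc.hasDerivAt_moment ht (fun i => (i : ℝ))
  constant_of_has_deriv_right_zero (fun t ht => (hderiv t ht).continuousAt.continuousWithinAt)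
    fun t ht => (hderiv t (Set.Ico_subset_Icc_self ht)).hasDerivWithinAt

end IsTruncSolIso

theorem le_mul_exp_of_hasDerivAt_le {f f' : ℝ → ℝ} {K a b : ℝ}
    (hf : ∀ t ∈ Set.Icc a b, HasDerivAt f (f' t) t)
    (bound : ∀ t ∈ Set.Icc a b, f' t ≤ K * f t) :
    ∀ t ∈ Set.Icc a b, f t ≤ f a * Real.exp (K * (t - a)) := by
  intro t ht
  have hslope (x : ℝ) (hx : x ∈ Set.Ico a b) (r : ℝ) (hr : f' x < r) :
      ∃ᶠ z in nhdsWithin x (Set.Ioi x), (z - x)⁻¹ * (f z - f x) < r := by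
    have hx' := (hf x (Set.Ico_subset_Icc_self hx)).hasDerivWithinAt (s := Set.Ici x)
    simpa only [slope_def_field, div_eq_inv_mul] using hx'.liminf_right_slope_le hr
  have := le_gronwallBound_of_liminf_deriv_right_le (K := K) (ε := 0)
    (fun x hx => (hf x hx).continuousAt.continuousWithinAt) hslope le_rfl
    (fun x hx => by simpa only [add_zero] using bound x (Set.Ico_subset_Icc_self hx)) t ht
  rwa [gronwallBound_ε0] at this

namespace GB

variable {a : ℕ → ℕ → ℕ → ℝ} {C Q : ℝ} {q : ℕ → ℕ → ℝ} {σ : ℝ → ℝ} {m : ℝ}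

theorem weight_nonneg (hGB : GB a C Q q) {j k : ℕ} (hkj : k ≤ j) : 0 ≤ q j k * (j - k + 1) :=
  mul_nonneg (hGB.2.2.1 j k) (by linarith [(Nat.cast_le (α := ℝ)).mpr hkj])

theorem rate_mul_exchange_le (hGB : GB a C Q q) (ha : ∀ i j k, 0 ≤ a i j k)
    (hσ : ConvexOn ℝ (Set.Ici 0) σ) (hσnn : ∀ x, 0 ≤ x → 0 ≤ σ x) (hσ0 : σ 0 = 0)
    (hm : SigmaConst σ m) {j k l : ℕ} (hk : 1 ≤ k) (hkj : k ≤ j) :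
    a j l k * (σ ↑(j - k) + σ ↑(l + k) - σ j - σ l)
      ≤ C * q j k * (j - k + 1) * (m * (l * σ k + k * σ l)) := by
  have hfactor : 0 ≤ C * q j k * (j - k + 1) := by
    rw [mul_assoc]; exact mul_nonneg (by linarith [hGB.1]) (hGB.weight_nonneg hkj)
  have hk' : (1 : ℝ) ≤ k := by exact_mod_cast hk
  have hexchange : ((l + k : ℕ) : ℝ) * (σ ↑(j - k) + σ ↑(l + k) - σ j - σ l)
      ≤ m * (l * σ k + k * σ l) := by
    have h :=
      hm.mul_exchange_le hσ hσ0 (x := ↑(j - k)) (Nat.cast_nonneg _) hk' (Nat.cast_nonneg l)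
    rwa [← Nat.cast_add, ← Nat.cast_add, Nat.sub_add_cancel hkj] at h
  rcases le_or_gt (σ ↑(j - k) + σ ↑(l + k) - σ j - σ l) 0 with hneg | hpos
  · have : 0 ≤ m * (l * σ k + k * σ l) :=
      mul_nonneg hm.1 (by have := hσnn k k.cast_nonneg; have := hσnn l l.cast_nonneg; positivity)
    exact (mul_nonpos_of_nonneg_of_nonpos (ha j l k) hneg).trans (mul_nonneg hfactor this)
  -- (GB) says nothing about `a j 0 k`, but for `l = 0` the bracket is nonpositive
  have hl : 1 ≤ l := by
    by_contra! hl
    obtain rfl : l = 0 := by omega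
    have hzero : m * (((0 : ℕ) : ℝ) * σ k + k * σ ((0 : ℕ) : ℝ)) = 0 := by simp [hσ0]
    rw [hzero] at hexchange
    exact (mul_pos (by positivity) hpos).not_ge hexchange
  calc a j l k * (σ ↑(j - k) + σ ↑(l + k) - σ j - σ l)
      ≤ C * (j - k + 1) * (l + k) * q j k * (σ ↑(j - k) + σ ↑(l + k) - σ j - σ l) :=
        mul_le_mul_of_nonneg_right (hGB.2.2.2.2 j l k hk hkj hl) hpos.le
    _ = C * q j k * (j - k + 1) *
          (((l + k : ℕ) : ℝ) * (σ ↑(j - k) + σ ↑(l + k) - σ j - σ l)) := by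
        push_cast; ring
    _ ≤ C * q j k * (j - k + 1) * (m * (l * σ k + k * σ l)) :=
        mul_le_mul_of_nonneg_left hexchange hfactor

theorem sum_weight_mul_le (hGB : GB a C Q q) (hσ : ConvexOn ℝ (Set.Ici 0) σ)
    (hσnn : ∀ x, 0 ≤ x → 0 ≤ σ x) (hσ0 : σ 0 = 0) {X Y : ℝ} (hX : 0 ≤ X) (hY : 0 ≤ Y) (j : ℕ) :
    ∑ k ∈ Icc 1 j, q j k * (j - k + 1) * (σ k * X + k * Y) ≤ Q * (σ j * X + j * Y) := by
  rcases Nat.eq_zero_or_pos j with rfl | hj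
  · simp [hσ0]
  have hj' : (0 : ℝ) < j := by exact_mod_cast hj
  have hD : 0 ≤ σ j * X / j + Y := by have := hσnn j j.cast_nonneg; positivity
  have hterm (k : ℕ) (hk : k ∈ Icc 1 j) :
      q j k * (j - k + 1) * (σ k * X + k * Y)
        ≤ (σ j * X / j + Y) * (k * (j - k + 1) * q j k) := by
    have hkj : (k : ℝ) ≤ j := by exact_mod_cast (mem_Icc.mp hk).2
    have hslope : σ k ≤ k * σ j / j := by
      rw [le_div_iff₀ hj', mul_comm]
      exact mul_apply_le_mul_apply_of_convexOn hσ hσ0 k.cast_nonneg hkj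
    have hweight := hGB.weight_nonneg (mem_Icc.mp hk).2
    calc q j k * (j - k + 1) * (σ k * X + k * Y)
        ≤ q j k * (j - k + 1) * (k * σ j / j * X + k * Y) := by gcongr
      _ = (σ j * X / j + Y) * (k * (j - k + 1) * q j k) := by ring
  calc ∑ k ∈ Icc 1 j, q j k * (j - k + 1) * (σ k * X + k * Y)
      ≤ (σ j * X / j + Y) * ∑ k ∈ Icc 1 j, (k : ℝ) * (j - k + 1) * q j k := by
        rw [mul_sum]; exact sum_le_sum hterm
    _ ≤ (σ j * X / j + Y) * (Q * j) := mul_le_mul_of_nonneg_left (hGB.2.2.2.1 j hj) hD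
    _ = Q * (σ j * X + j * Y) := by field_simp

theorem sum_rate_mul_exchange_le (hGB : GB a C Q q) (ha : ∀ i j k, 0 ≤ a i j k)
    (hσ : ConvexOn ℝ (Set.Ici 0) σ) (hσnn : ∀ x, 0 ≤ x → 0 ≤ σ x) (hσ0 : σ 0 = 0)
    (hm : SigmaConst σ m) {N : ℕ} {b : ℕ → ℝ} (hb : ∀ i ≤ N, 0 ≤ b i) {j k : ℕ} (hk : 1 ≤ k)
    (hkj : k ≤ j) (hjN : j ≤ N) :
    ∑ l ∈ Icc 0 (N - k), a j l k * b j * b l * (σ ↑(j - k) + σ ↑(l + k) - σ j - σ l)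
      ≤ C * m * b j * (q j k * (j - k + 1) *
          (σ k * moment (fun i => (i : ℝ)) N b + k * moment (fun i => σ i) N b)) := by
  have hbj := hb j hjN
  have hC : 0 ≤ C := zero_le_one.trans hGB.1
  calc ∑ l ∈ Icc 0 (N - k), a j l k * b j * b l * (σ ↑(j - k) + σ ↑(l + k) - σ j - σ l)
      ≤ ∑ l ∈ Icc 0 (N - k), C * m * b j * (q j k * (j - k + 1) * (b l * (l * σ k + k * σ l))) := by
        refine sum_le_sum fun l hl => ?_
        have hbl := hb l (by rw [mem_Icc] at hl; omega)
        calc a j l k * b j * b l * (σ ↑(j - k) + σ ↑(l + k) - σ j - σ l)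
            = b j * b l * (a j l k * (σ ↑(j - k) + σ ↑(l + k) - σ j - σ l)) := by ring
          _ ≤ b j * b l * (C * q j k * (j - k + 1) * (m * (l * σ k + k * σ l))) :=
            mul_le_mul_of_nonneg_left (hGB.rate_mul_exchange_le ha hσ hσnn hσ0 hm hk hkj)
              (mul_nonneg hbj hbl)
          _ = C * m * b j * (q j k * (j - k + 1) * (b l * (l * σ k + k * σ l))) := by ring
    _ ≤ ∑ l ∈ range (N + 1), C * m * b j * (q j k * (j - k + 1) * (b l * (l * σ k + k * σ l))) := by
        refine sum_le_sum_of_subset_of_nonneg (fun l hl => ?_) fun l hl _ => ?_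
        · simp only [mem_Icc, mem_range] at hl ⊢; omega
        have := hb l (Nat.lt_succ_iff.mp (mem_range.mp hl))
        have := hGB.weight_nonneg hkj
        have := hσnn k k.cast_nonneg
        have := hσnn l l.cast_nonneg
        have := hm.1
        positivity
    _ = C * m * b j * (q j k * (j - k + 1) *
          (σ k * moment (fun i => (i : ℝ)) N b + k * moment (fun i => σ i) N b)) := by
        simp only [moment, mul_sum, ← sum_add_distrib]
        exact sum_congr rfl fun l _ => by ring

theorem weakForm_le (hGB : GB a C Q q) (ha : ∀ i j k, 0 ≤ a i j k)
    (hσ : ConvexOn ℝ (Set.Ici 0) σ) (hσnn : ∀ x, 0 ≤ x → 0 ≤ σ x) (hσ0 : σ 0 = 0)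
    (hm : SigmaConst σ m) {N : ℕ} {b : ℕ → ℝ} (hb : ∀ i ≤ N, 0 ≤ b i) :
    weakForm a N b (fun i => σ i)
      ≤ 2 * C * Q * m * moment (fun i => (i : ℝ)) N b * moment (fun i => σ i) N b := by
  set M₁ := moment (fun i => (i : ℝ)) N b
  set Mσ := moment (fun i => σ i) N b
  have hM₁ : 0 ≤ M₁ := moment_nonneg (fun i => i.cast_nonneg) hb
  have hMσ : 0 ≤ Mσ := moment_nonneg (fun i => hσnn _ i.cast_nonneg) hb
  calc weakForm a N b (fun i => σ i)
      ≤ ∑ k ∈ Icc 1 N, ∑ j ∈ Icc k N,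
          C * m * b j * (q j k * (j - k + 1) * (σ k * M₁ + k * Mσ)) := by
        refine sum_le_sum fun k hk => sum_le_sum fun j hj => ?_
        rw [mem_Icc] at hk hj
        exact hGB.sum_rate_mul_exchange_le ha hσ hσnn hσ0 hm hb hk.1 hj.1 hj.2
    _ = ∑ j ∈ range (N + 1),
          C * m * b j * ∑ k ∈ Icc 1 j, q j k * (j - k + 1) * (σ k * M₁ + k * Mσ) := by
        rw [sum_comm' (t' := range (N + 1)) (s' := fun j => Icc 1 j)
          fun k j => by simp only [mem_Icc, mem_range]; omega]
        simp only [mul_sum]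
    _ ≤ ∑ j ∈ range (N + 1), C * m * b j * (Q * (σ j * M₁ + j * Mσ)) := by
        refine sum_le_sum fun j hj => mul_le_mul_of_nonneg_left
          (hGB.sum_weight_mul_le hσ hσnn hσ0 hM₁ hMσ j) ?_
        have := hb j (Nat.lt_succ_iff.mp (mem_range.mp hj))
        have := zero_le_one.trans hGB.1
        have := hm.1
        positivity
    _ = C * m * Q * (M₁ * ∑ j ∈ range (N + 1), σ j * b j + Mσ * ∑ j ∈ range (N + 1), j * b j) := by
        rw [mul_sum, mul_sum, ← sum_add_distrib, mul_sum]
        exact sum_congr rfl fun j _ => by ring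
    _ = 2 * C * Q * m * M₁ * Mσ := by
        change C * m * Q * (M₁ * Mσ + Mσ * M₁) = _
        ring

end GB

theorem truncated_sigma_moment_bound_general
    (a : ℕ → ℕ → ℕ → ℝ) (ha : ∀ i j k, 0 ≤ a i j k)
    (C Q : ℝ) (q : ℕ → ℕ → ℝ) (hGB : GB a C Q q)
    (σ : ℝ → ℝ) (hσ : ClassE σ ∨ ClassE1 σ) (m : ℝ) (hm : SigmaConst σ m)
    (N : ℕ) (T : ℝ)
    (c : ℕ → ℝ → ℝ) (hc : IsTruncSolIso a N (Set.Icc 0 T) c)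
    (c0 : ℕ → ℝ)
    (hinit : ∀ i, i ≤ N → c i 0 = c0 i)
    (hnn : ∀ i, i ≤ N → ∀ t ∈ Set.Icc (0 : ℝ) T, 0 ≤ c i t)
    (K : ℝ) (hK : K = 2 * C * Q * m * ∑ i ∈ Finset.range (N + 1), (i : ℝ) * c0 i) :
    ∀ t ∈ Set.Icc (0 : ℝ) T,
      ∑ i ∈ Finset.range (N + 1), σ i * c i t
        ≤ Real.exp (K * t) * ∑ i ∈ Finset.range (N + 1), σ i * c0 i := by
  obtain ⟨hconv, hσnn, hσ0⟩ := convexOn_nonneg_zero_of_classE_or_classE1 hσ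
  have hmoment_zero (φ : ℕ → ℝ) : moment φ N (c · 0) = moment φ N c0 :=
    sum_congr rfl fun i hi => by dsimp only; rw [hinit i (Nat.lt_succ_iff.mp (mem_range.mp hi))]
  have hbound (t : ℝ) (ht : t ∈ Set.Icc 0 T) :
      weakForm a N (c · t) (fun i => σ i) ≤ K * moment (fun i => σ i) N (c · t) :=
    calc weakForm a N (c · t) (fun i => σ i)
        ≤ 2 * C * Q * m * moment (fun i => (i : ℝ)) N (c · t) * moment (fun i => σ i) N (c · t) :=
          hGB.weakForm_le ha hconv hσnn hσ0 hm fun i hi => hnn i hi t ht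
      _ = K * moment (fun i => σ i) N (c · t) := by
          rw [hc.moment_natCast_eq t ht, hmoment_zero, hK]; rfl
  intro t ht
  have := le_mul_exp_of_hasDerivAt_le (fun s hs => hc.hasDerivAt_moment hs _) hbound t ht
  rw [sub_zero, hmoment_zero, mul_comm] at this
  exact this

/-- Lemma 4.5, first part: moment bound for the truncated isolated system. -/
theorem truncated_sigma_moment_bound
    (a : ℕ → ℕ → ℕ → ℝ) (ha : ∀ i j k, 0 ≤ a i j k)
    (hzero : ∀ p : ℕ, 1 ≤ p → a p 0 p = 0)
    (C Q : ℝ) (q : ℕ → ℕ → ℝ) (hGB : GB a C Q q)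
    (σ : ℝ → ℝ) (hσ : ClassE σ ∨ ClassE1 σ) (m : ℝ) (hm : SigmaConst σ m)
    (N : ℕ) (hN : 2 ≤ N) (T : ℝ) (hT : 0 ≤ T)
    (c : ℕ → ℝ → ℝ) (hc : IsTruncSolIso a N (Set.Icc 0 T) c)
    (c0 : ℕ → ℝ) (hc0 : ∀ i, 0 ≤ c0 i)
    (hinit : ∀ i, i ≤ N → c i 0 = c0 i)
    (hnn : ∀ i, i ≤ N → ∀ t ∈ Set.Icc (0 : ℝ) T, 0 ≤ c i t)
    (K : ℝ) (hK : K = 2 * C * Q * m * ∑ i ∈ Finset.range (N + 1), (i : ℝ) * c0 i) :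
    ∀ t ∈ Set.Icc (0 : ℝ) T,
      ∑ i ∈ Finset.range (N + 1), σ i * c i t
        ≤ Real.exp (K * t) * ∑ i ∈ Finset.range (N + 1), σ i * c0 i :=
  truncated_sigma_moment_bound_general a ha C Q q hGB σ hσ m hm N T c hc c0 hinit hnn K hK
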